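/- For the zero-temperature total QFI with squeezed-vacuum probes, 𝓘(M) = 4𝒩_S[(1-η²)² + η⁴] / ((1-η²)[1 + 2(𝒩_S/M)η²(1-η²)]), one has 𝓘(M) > 4𝒩_S (the coherent-state total QFI) if and only if 𝒩_S/M < (2η²-1)/(2(1-η²)²); in particular no finite or infinite M admits an advantage unless η > 1/√2. -/

import Mathlib

noncomputable def Itotsq (η 𝒩 M : ℝ) : ℝ :=
  4*𝒩*((1-η^2)^2 + η^4) / ((1-η^2)*(1 + 2*(𝒩/M)*η^2*(1-η^2)))

/-! Writing `r = 𝒩/M`, the advantage `Itotsq > 4𝒩` amounts, after clearing the positive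
denominator, to the positivity of the numerator minus the denominator, which factors as
`η² ((2η² - 1) - 2r(1 - η²)²)`. Since `r > 0`, an advantage forces `2η² > 1`. -/

theorem itotsq_numerator_sub_denominator_eq (η r : ℝ) :
    (1-η^2)^2 + η^4 - (1-η^2)*(1 + 2*r*η^2*(1-η^2)) =
      η^2 * ((2*η^2 - 1) - r*(2*(1-η^2)^2)) := by
  ring

theorem four_mul_lt_itotsq_iff {η 𝒩 M : ℝ} (hη : η ≠ 0) (hη1 : η^2 < 1) (h𝒩 : 0 < 𝒩)
    (hM : 0 < M) :
    4*𝒩 < Itotsq η 𝒩 M ↔ 𝒩/M < (2*η^2 - 1)/(2*(1-η^2)^2) := by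
  have hx : 0 < 1 - η^2 := sub_pos.2 hη1
  have hr : 0 < 𝒩/M := div_pos h𝒩 hM
  have hD : 0 < (1-η^2)*(1 + 2*(𝒩/M)*η^2*(1-η^2)) := by positivity
  rw [Itotsq, lt_div_iff₀ hD, lt_div_iff₀ (by positivity)]
  calc 4*𝒩 * ((1-η^2)*(1 + 2*(𝒩/M)*η^2*(1-η^2))) < 4*𝒩*((1-η^2)^2 + η^4)
      ↔ 0 < (1-η^2)^2 + η^4 - (1-η^2)*(1 + 2*(𝒩/M)*η^2*(1-η^2)) := by
        rw [mul_lt_mul_iff_right₀ (by positivity), sub_pos]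
    _ ↔ 𝒩/M * (2*(1-η^2)^2) < 2*η^2 - 1 := by
        rw [itotsq_numerator_sub_denominator_eq, mul_pos_iff_of_pos_left (by positivity), sub_pos]

theorem one_div_sqrt_two_lt_of_half_lt_sq {η : ℝ} (hη : 0 ≤ η) (h : 1/2 < η^2) :
    1/Real.sqrt 2 < η :=
  lt_of_pow_lt_pow_left₀ 2 hη <| by
    rwa [div_pow, one_pow, Real.sq_sqrt zero_le_two]

theorem squeezed_vacuum_total_advantage (η 𝒩 : ℝ) (hη0 : 0 < η) (hη1 : η < 1)
    (h𝒩 : 0 < 𝒩) :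
    (∀ M : ℝ, 0 < M →
      (Itotsq η 𝒩 M > 4*𝒩 ↔ 𝒩/M < (2*η^2 - 1)/(2*(1-η^2)^2))) ∧
    ((∃ M : ℝ, 0 < M ∧ Itotsq η 𝒩 M > 4*𝒩) → η > 1/Real.sqrt 2) := by
  have hη1' : η^2 < 1 := pow_lt_one₀ hη0.le hη1 two_ne_zero
  have key M (hM : 0 < M) := four_mul_lt_itotsq_iff hη0.ne' hη1' h𝒩 hM
  refine ⟨key, ?_⟩
  rintro ⟨M, hM, hadv⟩
  have hthreshold : 0 < (2*η^2 - 1)/(2*(1-η^2)^2) :=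
    (div_pos h𝒩 hM).trans ((key M hM).1 hadv)
  have hhalf : 1/2 < η^2 := by
    linarith [(div_pos_iff_of_pos_right (by positivity)).1 hthreshold]
  exact one_div_sqrt_two_lt_of_half_lt_sq hη0.le hhalf
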